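/- Let h > 0 and let g : ℝ≥0 → ℝ be continuous with g(0) = 0 and g(t) ≥ 0 for all t. Then the two-sided Skorohod reflection satisfies Λ_{0,h}(g)(t) ≤ g(t) for all t; equivalently, the h-cut g_h := g − Λ_{0,h}(g) is non-negative. -/

import Mathlib

open Set
open scoped NNReal ENNReal

/-- Solution data for the two-sided Skorohod reflection problem of `f` on `[0,h]`:
`c0` and `ch` are the compensators at `0` and at `h`,
and `fun t => f t + ch t + c0 t` is the reflected path `Λ_{0,h}(f)`.
The support conditions on the measures `dc⁰` and `d(−cʰ)` are phrased as:
the compensator is constant on every (closed) interval on which the reflected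
path avoids the corresponding boundary. -/
structure SkorohodPair (h : ℝ) (f c0 ch : ℝ≥0 → ℝ) : Prop where
  cont0 : Continuous c0
  conth : Continuous ch
  init0 : c0 0 = 0
  inith : ch 0 = 0
  mem_Icc : ∀ t, f t + ch t + c0 t ∈ Set.Icc (0 : ℝ) h
  mono0 : Monotone c0
  antih : Antitone ch
  flat0 : ∀ a b : ℝ≥0, a ≤ b → (∀ t ∈ Set.Icc a b, f t + ch t + c0 t ≠ 0) → c0 b = c0 a
  flath : ∀ a b : ℝ≥0, a ≤ b → (∀ t ∈ Set.Icc a b, f t + ch t + c0 t ≠ h) → ch b = ch a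

/-! Suppose `k := c0 + ch` is positive at `t₀` and let `s < t₀` be the last time before `t₀`
with `k s ≤ 0`. On `(s, t₀]` the reflected path `g + k` exceeds `g ≥ 0`, so it never hits `0`
and `c0` is flat there; by continuity `c0 t₀ = c0 s`. Since `ch` is non-increasing,
`k t₀ ≤ k s ≤ 0`, a contradiction. -/

theorem eq_of_continuous_of_eqOn_Ioc {α β : Type*} [TopologicalSpace α] [LinearOrder α]
    [OrderTopology α] [DenselyOrdered α] [TopologicalSpace β] [T2Space β] {f : α → β}
    (hf : Continuous f) {s t : α} (hst : s < t) (hflat : ∀ u ∈ Ioc s t, f u = f t) :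
    f s = f t := by
  have hEq : EqOn f (fun _ => f t) (closure (Ioc s t)) :=
    EqOn.closure hflat hf continuous_const
  exact hEq (by rw [closure_Ioc hst.ne]; exact left_mem_Icc.mpr hst.le)

theorem IsClosed.exists_last_mem_le {α : Type*} [ConditionallyCompleteLinearOrder α]
    [TopologicalSpace α] [OrderTopology α] {S : Set α} (hS : IsClosed S) {a t : α}
    (ha : a ∈ S) (hat : a ≤ t) : ∃ s ∈ S, s ≤ t ∧ ∀ u ∈ Ioc s t, u ∉ S := by
  have hbdd : BddAbove (S ∩ Iic t) := ⟨t, fun _ hu => hu.2⟩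
  obtain ⟨hsS, hst⟩ := (hS.inter isClosed_Iic).csSup_mem ⟨a, ha, hat⟩ hbdd
  refine ⟨_, hsS, hst, fun u hu huS => ?_⟩
  exact (le_csSup hbdd ⟨huS, hu.2⟩).not_gt hu.1

namespace SkorohodPair

variable {h : ℝ} {f c0 ch : ℝ≥0 → ℝ}

theorem c0_eq_of_forall_Ioc_pos (hp : SkorohodPair h f c0 ch) {s t : ℝ≥0} (hst : s < t)
    (hpos : ∀ u ∈ Ioc s t, 0 < f u + ch u + c0 u) : c0 s = c0 t :=
  eq_of_continuous_of_eqOn_Ioc hp.cont0 hst fun a ha =>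
    (hp.flat0 a t ha.2 fun u hu => (hpos u ⟨ha.1.trans_le hu.1, hu.2⟩).ne').symm

end SkorohodPair

theorem two_sided_reflection_le_self
    (h : ℝ) (g : ℝ≥0 → ℝ)
    (hpos : ∀ t, 0 ≤ g t)
    (c0 ch : ℝ≥0 → ℝ) (hp : SkorohodPair h g c0 ch) :
    ∀ t, g t + ch t + c0 t ≤ g t := by
  intro t₀
  by_contra! hlt
  have hclosed : IsClosed {u | c0 u + ch u ≤ 0} :=
    isClosed_le (hp.cont0.add hp.conth) continuous_const
  obtain ⟨s, hs, hst₀, hafter⟩ : ∃ s, c0 s + ch s ≤ 0 ∧ s ≤ t₀ ∧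
      ∀ u ∈ Ioc s t₀, ¬c0 u + ch u ≤ 0 :=
    hclosed.exists_last_mem_le (a := 0) (by simp [hp.init0, hp.inith]) bot_le
  have hs_lt : s < t₀ := hst₀.lt_of_ne fun heq => by rw [heq] at hs; linarith
  have hc0 : c0 s = c0 t₀ := hp.c0_eq_of_forall_Ioc_pos hs_lt fun u hu => by
    linarith [hpos u, not_le.mp (hafter u hu)]
  have hch : ch t₀ ≤ ch s := hp.antih hst₀
  linarith
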